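/- arXiv:2210.08572 — 7 statements merged into one kernel-verified Lean document; each statement's English description precedes it below -/
import Mathlib

section
/- Unbiasedness of the pruning strategy: let w₁, …, w_m be positive real weights and define a random index process J₁, …, J_m by J₁ = 1 and, for each n < m, J_{n+1} = n+1 with probability w_{n+1}/(w₁ + ⋯ + w_{n+1}) and J_{n+1} = J_n otherwise, with these choices made independently. Then for every j ≤ m, P(J_m = j) = w_j/(w₁ + ⋯ + w_m). -/
/-!
By induction on `n`, `P(J n = j) = w j / (w 0 + ⋯ + w n)` for `j ≤ n`. Since `J n` is a function
of `U 0, …, U n`, it is independent of `U (n+1)`; hence for `j ≤ n` the step multiplies this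
probability by `1 - w (n+1) / (w 0 + ⋯ + w (n+1)) = (w 0 + ⋯ + w n) / (w 0 + ⋯ + w (n+1))`,
which telescopes, while `P(J (n+1) = n+1)` is the acceptance probability itself.
-/

open MeasureTheory Filter Topology ProbabilityTheory Set

noncomputable section

section Threshold

variable {Ω α : Type*} {U : Ω → ℝ} {X : Ω → α} {p : ℝ} {a : α}

lemma setOf_ite_lt_eq_left (hX : ∀ ω, X ω ≠ a) :
    {ω | (if U ω < p then a else X ω) = a} = {ω | U ω < p} := by
  ext ω
  by_cases h : U ω < p <;> simp [h, hX ω]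

variable [MeasurableSpace Ω] {μ : Measure Ω}

lemma measure_lt_of_map_eq_uniform (hU : Measurable U)
    (hUunif : μ.map U = volume.restrict (Icc 0 1)) (hp : p ≤ 1) :
    μ {ω | U ω < p} = ENNReal.ofReal p := by
  have hIio : Iio p ∩ Icc 0 1 = Ico 0 p := by
    ext x
    simp only [mem_inter_iff, mem_Iio, mem_Icc, mem_Ico]
    exact ⟨fun h => ⟨h.2.1, h.1⟩, fun h => ⟨h.2, h.1, by linarith [h.2]⟩⟩
  change μ (U ⁻¹' Iio p) = _
  rw [← Measure.map_apply hU measurableSet_Iio, hUunif,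
    Measure.restrict_apply measurableSet_Iio, hIio, Real.volume_Ico, sub_zero]

lemma measure_ge_of_map_eq_uniform (hU : Measurable U)
    (hUunif : μ.map U = volume.restrict (Icc 0 1)) (hp : 0 ≤ p) :
    μ {ω | p ≤ U ω} = ENNReal.ofReal (1 - p) := by
  have hIci : Ici p ∩ Icc 0 1 = Icc p 1 := by
    ext x
    simp only [mem_inter_iff, mem_Ici, mem_Icc]
    exact ⟨fun h => ⟨h.1, h.2.2⟩, fun h => ⟨h.1, hp.trans h.1, h.2⟩⟩
  change μ (U ⁻¹' Ici p) = _
  rw [← Measure.map_apply hU measurableSet_Ici, hUunif,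
    Measure.restrict_apply measurableSet_Ici, hIci, Real.volume_Icc]

lemma measure_ite_lt_eq_of_ne [MeasurableSpace α] [MeasurableSingletonClass α]
    (hUX : IndepFun U X μ) {j : α} (hj : j ≠ a) :
    μ {ω | (if U ω < p then a else X ω) = j} = μ {ω | p ≤ U ω} * μ {ω | X ω = j} := by
  have hset : {ω | (if U ω < p then a else X ω) = j} = U ⁻¹' Ici p ∩ X ⁻¹' {j} := by
    ext ω
    by_cases h : U ω < p
    · simp [h, hj.symm]
    · simp [h, not_lt.1 h]
  rw [hset, hUX.measure_inter_preimage_eq_mul _ _ measurableSet_Ici (measurableSet_singleton j)]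
  rfl

end Threshold

namespace Pruning

variable {m : ℕ} (w : Fin m → ℝ)

def prefixSum (n : ℕ) : ℝ :=
  ∑ i ∈ Finset.univ.filter (fun i : Fin m => (i : ℕ) ≤ n), w i

lemma prefixSum_zero (hm : 0 < m) : prefixSum w 0 = w ⟨0, hm⟩ := by
  have : Finset.univ.filter (fun i : Fin m => (i : ℕ) ≤ 0) = {⟨0, hm⟩} := by
    ext i
    simp [Fin.ext_iff]
  rw [prefixSum, this, Finset.sum_singleton]

lemma prefixSum_succ {n : ℕ} (h : n + 1 < m) :
    prefixSum w (n + 1) = prefixSum w n + w ⟨n + 1, h⟩ := by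
  have : Finset.univ.filter (fun i : Fin m => (i : ℕ) ≤ n + 1) =
      insert ⟨n + 1, h⟩ (Finset.univ.filter (fun i : Fin m => (i : ℕ) ≤ n)) := by
    ext i
    simp only [Finset.mem_filter, Finset.mem_univ, true_and, Finset.mem_insert, Fin.ext_iff]
    omega
  rw [prefixSum, this, Finset.sum_insert (by simp), add_comm, prefixSum]

lemma prefixSum_sub_one : prefixSum w (m - 1) = ∑ i, w i := by
  rw [prefixSum, Finset.filter_true_of_mem fun i _ => Nat.le_sub_one_of_lt i.isLt]

lemma prefixSum_pos (hm : 0 < m) (hw : ∀ i, 0 < w i) (n : ℕ) : 0 < prefixSum w n :=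
  Finset.sum_pos (fun i _ => hw i) ⟨⟨0, hm⟩, by simp⟩

lemma one_sub_div_prefixSum_succ (hm : 0 < m) (hw : ∀ i, 0 < w i) {n : ℕ} (h : n + 1 < m) :
    1 - w ⟨n + 1, h⟩ / prefixSum w (n + 1) = prefixSum w n / prefixSum w (n + 1) := by
  rw [one_sub_div (prefixSum_pos w hm hw _).ne', prefixSum_succ w h, add_sub_cancel_right]

variable {Ω : Type*}

abbrev history (U : Fin m → Ω → ℝ) (n : ℕ) : MeasurableSpace Ω :=
  ⨆ i ∈ {i : Fin m | (i : ℕ) ≤ n}, MeasurableSpace.comap (U i) inferInstance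

lemma comap_le_history (U : Fin m → Ω → ℝ) {n : ℕ} {i : Fin m} (hi : (i : ℕ) ≤ n) :
    MeasurableSpace.comap (U i) inferInstance ≤ history U n :=
  le_biSup (fun i : Fin m => MeasurableSpace.comap (U i) inferInstance) hi

lemma history_mono (U : Fin m → Ω → ℝ) : Monotone (history U) :=
  fun _ _ hnk => biSup_mono fun _ hi => le_trans hi hnk

structure IsPruningProcess (hm : 0 < m) (U : Fin m → Ω → ℝ) (J : ℕ → Ω → Fin m) :
    Prop where
  zero : ∀ ω, J 0 ω = ⟨0, hm⟩
  succ : ∀ (n : ℕ) (h : n + 1 < m) (ω : Ω), J (n + 1) ω =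
    if U ⟨n + 1, h⟩ ω < w ⟨n + 1, h⟩ / prefixSum w (n + 1) then ⟨n + 1, h⟩ else J n ω

variable {w} {hm : 0 < m} {U : Fin m → Ω → ℝ} {J : ℕ → Ω → Fin m}

namespace IsPruningProcess

lemma val_le (hJ : IsPruningProcess w hm U J) :
    ∀ {n : ℕ}, n < m → ∀ ω, (J n ω : ℕ) ≤ n
  | 0, _, ω => by simp [hJ.zero ω]
  | n + 1, h, ω => by
    rw [hJ.succ n h ω]
    split_ifs
    · exact le_rfl
    · exact (hJ.val_le (Nat.lt_of_succ_lt h) ω).trans n.le_succ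

lemma measurable_history (hJ : IsPruningProcess w hm U J) :
    ∀ {n : ℕ}, n < m → Measurable[history U n] (J n)
  | 0, _ => by
    rw [show J 0 = fun _ => ⟨0, hm⟩ from funext hJ.zero]
    exact measurable_const
  | n + 1, h => by
    rw [show J (n + 1) = _ from funext (hJ.succ n h)]
    refine Measurable.ite ?_ measurable_const
      ((hJ.measurable_history (Nat.lt_of_succ_lt h)).mono ?_ le_rfl)
    · exact comap_le_history U (i := ⟨n + 1, h⟩) le_rfl _
        (measurableSet_Iio.preimage (comap_measurable _))
    · exact history_mono U n.le_succ

variable [MeasurableSpace Ω]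

lemma indepFun (hJ : IsPruningProcess w hm U J) {μ : Measure Ω}
    (hUmeas : ∀ i, Measurable (U i)) (hUindep : iIndepFun U μ) {n : ℕ} (h : n + 1 < m) :
    IndepFun (U ⟨n + 1, h⟩) (J n) μ := by
  have hdisj : Disjoint ({⟨n + 1, h⟩} : Set (Fin m)) {i : Fin m | (i : ℕ) ≤ n} := by
    simp
  have hind := indep_iSup_of_disjoint (fun i => (hUmeas i).comap_le)
    ((iIndepFun_iff_iIndep _ _ _).1 hUindep) hdisj
  rw [iSup_singleton] at hind
  exact (IndepFun_iff_Indep _ _ _).2 (indep_of_indep_of_le_right hind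
    (hJ.measurable_history (Nat.lt_of_succ_lt h)).comap_le)

lemma measure_eq (hJ : IsPruningProcess w hm U J) {μ : Measure Ω} [IsProbabilityMeasure μ]
    (hw : ∀ i, 0 < w i) (hUmeas : ∀ i, Measurable (U i)) (hUindep : iIndepFun U μ)
    (hUunif : ∀ i, μ.map (U i) = volume.restrict (Icc 0 1)) :
    ∀ {n : ℕ}, n < m → ∀ j : Fin m, (j : ℕ) ≤ n →
      μ {ω | J n ω = j} = ENNReal.ofReal (w j / prefixSum w n)
  | 0, _, j, hj => by
    obtain rfl : j = ⟨0, hm⟩ := Fin.ext (Nat.le_zero.1 hj)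
    simp [hJ.zero, prefixSum_zero w hm, (hw _).ne']
  | n + 1, h, j, hj => by
    set a : Fin m := ⟨n + 1, h⟩
    have hS := prefixSum_pos w hm hw
    have hp : w a / prefixSum w (n + 1) ≤ 1 :=
      div_le_one_of_le₀ (by rw [prefixSum_succ w h]; linarith [hS n]) (hS _).le
    have hJn : ∀ ω, J n ω ≠ a := fun ω hω => by
      have := hJ.val_le (Nat.lt_of_succ_lt h) ω
      rw [hω] at this
      exact n.not_succ_le_self this
    simp only [hJ.succ n h]
    by_cases hja : j = a
    · subst hja
      rw [setOf_ite_lt_eq_left hJn,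
        measure_lt_of_map_eq_uniform (hUmeas _) (hUunif _) hp]
    · have hjn : (j : ℕ) ≤ n := Nat.le_of_lt_succ (lt_of_le_of_ne hj (hja <| Fin.ext ·))
      rw [measure_ite_lt_eq_of_ne (hJ.indepFun hUmeas hUindep h) hja,
        measure_ge_of_map_eq_uniform (hUmeas a) (hUunif a) (div_pos (hw a) (hS _)).le,
        hJ.measure_eq hw hUmeas hUindep hUunif (Nat.lt_of_succ_lt h) j hjn,
        one_sub_div_prefixSum_succ w hm hw h, ← ENNReal.ofReal_mul (div_pos (hS n) (hS _)).le]
      congr 1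
      field_simp [(hS n).ne']

end IsPruningProcess

end Pruning

/-- **Unbiasedness of the pruning strategy.**  Let `w 0, …, w (m-1)` be positive real
weights and let the random index process `J` be defined by `J 0 = 0` and, for each `n`,
`J (n+1) = n+1` with probability `w (n+1) / (w 0 + ⋯ + w (n+1))` and `J (n+1) = J n`
otherwise, these choices being made independently (here realized by independent uniform
random variables `U i` on `[0,1]`).  Then for every index `j`,
`P(J (m-1) = j) = w j / (w 0 + ⋯ + w (m-1))`. -/
theorem pruning_unbiased
    {Ω : Type*} [MeasurableSpace Ω] (μ : Measure Ω) [IsProbabilityMeasure μ]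
    (m : ℕ) (hm : 0 < m) (w : Fin m → ℝ) (hw : ∀ i, 0 < w i)
    (U : Fin m → Ω → ℝ) (hUmeas : ∀ i, Measurable (U i))
    (hUindep : iIndepFun U μ)
    (hUunif : ∀ i, μ.map (U i) = volume.restrict (Set.Icc (0 : ℝ) 1))
    (J : ℕ → Ω → Fin m)
    (hJ0 : ∀ ω, J 0 ω = ⟨0, hm⟩)
    (hJstep : ∀ (n : ℕ) (h : n + 1 < m) (ω : Ω),
      J (n + 1) ω =
        if U ⟨n + 1, h⟩ ω <
            w ⟨n + 1, h⟩ / (∑ i ∈ Finset.univ.filter (fun i : Fin m => (i : ℕ) ≤ n + 1), w i)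
        then ⟨n + 1, h⟩ else J n ω) :
    ∀ j : Fin m, μ {ω | J (m - 1) ω = j} = ENNReal.ofReal (w j / ∑ i, w i) := by
  intro j
  have hJ : Pruning.IsPruningProcess w hm U J := ⟨hJ0, hJstep⟩
  rw [hJ.measure_eq hw hUmeas hUindep hUunif (Nat.sub_one_lt_of_lt hm) j
    (Nat.le_sub_one_of_lt j.isLt), Pruning.prefixSum_sub_one]

end
end

section
/- Left jump rate of an inversion-parameterized Geometric variable: fix p ∈ (0,1) and on Ω = [0,1] with the uniform measure define X(q)(ω) to be the unique nonnegative integer x with 1−(1−q)ˣ ≤ ω < 1−(1−q)^{x+1}, so that X(q) is Geometric with success probability q: P(X(q)=x) = q(1−q)ˣ for x = 0,1,2,…. Then for every integer x ≥ 1, lim_{ε→0⁺} P(X(p+ε) = x−1 | X(p) = x)/ε = x/(p(1−p)). -/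
/-!
On `[0, 1)` the event `{X q = n}` is the interval `[F q n, F q (n + 1))`, where
`F q n = geomCdf q n = 1 - (1 - q) ^ n`, and the endpoint `1` is a null set. Conditioning on
`{X p = x}` is therefore conditioning on an interval of length `p (1 - p) ^ x`. For small
`ε > 0` the event `{X (p + ε) = x - 1}` cuts out of it exactly `[F p x, F (p + ε) x)`, because
`F (p + ε) (x - 1) < F p x < F (p + ε) x < F p (x + 1)`. The conditional probability is thus
`(F (p + ε) x - F p x) / (p (1 - p) ^ x)`, and dividing by `ε` gives in the limit
`∂F/∂q (p, x) / (p (1 - p) ^ x) = x (1 - p) ^ (x - 1) / (p (1 - p) ^ x) = x / (p (1 - p))`.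
-/

open MeasureTheory Filter Topology ProbabilityTheory Set

noncomputable section

theorem setOf_eq_inter_eq_Ico_inter {α : Type*} [LinearOrder α] {c : ℕ → α} (hc : Monotone c)
    {S : Set α} {N : α → ℕ} (hN : ∀ ω ∈ S, ω ∈ Ico (c (N ω)) (c (N ω + 1))) (n : ℕ) :
    {ω | N ω = n} ∩ S = Ico (c n) (c (n + 1)) ∩ S := by
  ext ω
  refine ⟨fun ⟨hn, hS⟩ => ⟨hn ▸ hN ω hS, hS⟩, fun ⟨⟨hlo, hhi⟩, hS⟩ => ⟨?_, hS⟩⟩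
  obtain ⟨hlo', hhi'⟩ := hN ω hS
  rcases lt_trichotomy (N ω) n with hlt | heq | hgt
  · exact absurd (hhi'.trans_le (hc hlt)) hlo.not_gt
  · exact heq
  · exact absurd (hhi.trans_le (hc hgt)) hlo'.not_gt

theorem ProbabilityTheory.cond_restrict {Ω : Type*} [MeasurableSpace Ω] (μ : Measure Ω)
    {S : Set Ω} (hS : MeasurableSet S) (s : Set Ω) :
    (μ.restrict S)[|s] = μ[|s ∩ S] := by
  rw [cond, cond, Measure.restrict_restrict' hS, Measure.restrict_apply' hS]

theorem volume_cond_Ico_toReal {a b c : ℝ} {t : Set ℝ} (ht : Ico a b ∩ t = Ico a c)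
    (hac : a ≤ c) (hcb : c ≤ b) :
    (volume[|Ico a b] t).toReal = (c - a) / (b - a) := by
  rw [cond_apply measurableSet_Ico, ht, Real.volume_Ico, Real.volume_Ico, ENNReal.toReal_mul,
    ENNReal.toReal_inv, ENNReal.toReal_ofReal (sub_nonneg.2 hac),
    ENNReal.toReal_ofReal (sub_nonneg.2 (hac.trans hcb)), div_eq_inv_mul]

/-- `geomCdf q n = P(X < n)`, not `P(X ≤ n)`, for `X` Geometric with success probability `q`. -/
def geomCdf (q : ℝ) (n : ℕ) : ℝ := 1 - (1 - q) ^ n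

theorem geomCdf_strictMono {q : ℝ} (hq : q ∈ Ioo (0 : ℝ) 1) : StrictMono (geomCdf q) :=
  fun _ _ hmn => sub_lt_sub_left (pow_lt_pow_right_of_lt_one₀ (by linarith [hq.2])
    (by linarith [hq.1]) hmn) 1

theorem geomCdf_succ_sub (q : ℝ) (n : ℕ) :
    geomCdf q (n + 1) - geomCdf q n = q * (1 - q) ^ n := by
  simp only [geomCdf]
  ring

theorem geomCdf_le_geomCdf {q q' : ℝ} (hqq' : q ≤ q') (hq' : q' ≤ 1) (n : ℕ) :
    geomCdf q n ≤ geomCdf q' n :=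
  sub_le_sub_left (pow_le_pow_left₀ (by linarith) (by linarith) n) 1

theorem Ico_geomCdf_subset {q : ℝ} (hq : q ∈ Icc (0 : ℝ) 1) (n : ℕ) :
    Ico (geomCdf q n) (geomCdf q (n + 1)) ⊆ Ico 0 1 := by
  have h0 : 0 ≤ geomCdf q n := by simpa [geomCdf] using geomCdf_le_geomCdf hq.1 hq.2 n
  have h1 : geomCdf q (n + 1) ≤ 1 := sub_le_self 1 (pow_nonneg (by linarith [hq.2]) _)
  exact Ico_subset_Ico h0 h1

theorem continuous_geomCdf (n : ℕ) : Continuous fun q => geomCdf q n := by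
  unfold geomCdf
  fun_prop

theorem hasDerivAt_geomCdf (q : ℝ) (n : ℕ) :
    HasDerivAt (fun q => geomCdf q n) (n * (1 - q) ^ (n - 1)) q := by
  have h := (((hasDerivAt_id q).const_sub 1).pow n).const_sub 1
  simp only [id, mul_neg, mul_one, neg_neg] at h
  exact h

theorem eventually_geomCdf_add_lt {p c : ℝ} {n : ℕ} (h : geomCdf p n < c) :
    ∀ᶠ ε in 𝓝[>] 0, geomCdf (p + ε) n < c := by
  have hcont : Tendsto (fun ε => geomCdf (p + ε) n) (𝓝 0) (𝓝 (geomCdf p n)) :=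
    ((continuous_geomCdf n).comp (continuous_const_add p)).tendsto' 0 _ (by simp)
  exact eventually_nhdsWithin_of_eventually_nhds (hcont.eventually (eventually_lt_nhds h))

theorem tendsto_geomCdf_jump_rate {p : ℝ} (hp : p ∈ Ioo (0 : ℝ) 1) {x : ℕ} (hx : 1 ≤ x) :
    Tendsto (fun ε => (geomCdf (p + ε) x - geomCdf p x) / (geomCdf p (x + 1) - geomCdf p x) / ε)
      (𝓝[>] 0) (𝓝 (x / (p * (1 - p)))) := by
  have hslope := (hasDerivAt_geomCdf p x).tendsto_slope_zero_right.div_const (p * (1 - p) ^ x)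
  have hval : x * (1 - p) ^ (x - 1) / (p * (1 - p) ^ x) = x / (p * (1 - p)) := by
    have : (1 - p) ^ (x - 1) ≠ 0 := pow_ne_zero _ (by linarith [hp.2])
    rw [← pow_sub_one_mul (by omega : x ≠ 0)]
    field_simp
  rw [hval] at hslope
  refine hslope.congr fun ε => ?_
  rw [geomCdf_succ_sub, smul_eq_mul]
  ring

section Inversion

variable {X : ℝ → ℕ} {q : ℝ}

theorem setOf_eq_inter_Ico_eq_Ico_geomCdf (hq : q ∈ Ioo (0 : ℝ) 1)
    (hX : ∀ ω ∈ Ico (0 : ℝ) 1, ω ∈ Ico (geomCdf q (X ω)) (geomCdf q (X ω + 1))) (n : ℕ) :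
    {ω | X ω = n} ∩ Ico 0 1 = Ico (geomCdf q n) (geomCdf q (n + 1)) := by
  rw [setOf_eq_inter_eq_Ico_inter (geomCdf_strictMono hq).monotone hX,
    inter_eq_left.mpr (Ico_geomCdf_subset (Ioo_subset_Icc_self hq) n)]

theorem Ico_inter_setOf_eq_Ico_geomCdf {a b : ℝ} (hq : q ∈ Ioo (0 : ℝ) 1)
    (hX : ∀ ω ∈ Ico (0 : ℝ) 1, ω ∈ Ico (geomCdf q (X ω)) (geomCdf q (X ω + 1)))
    {n : ℕ} (hab : Ico a b ⊆ Ico 0 1) (ha : geomCdf q n ≤ a) (hb : geomCdf q (n + 1) ≤ b) :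
    Ico a b ∩ {ω | X ω = n} = Ico a (geomCdf q (n + 1)) := by
  rw [← inter_eq_left.mpr hab, inter_assoc, inter_comm (Ico 0 1),
    setOf_eq_inter_Ico_eq_Ico_geomCdf hq hX, Ico_inter_Ico, sup_eq_left.mpr ha,
    inf_eq_right.mpr hb]

end Inversion

/-- **Left jump rate of an inversion-parameterized Geometric variable.**  Fix `p ∈ (0,1)`
and on `Ω = [0,1]` with the uniform measure define `X q ω` to be the unique nonnegative
integer `x` with `1 - (1-q)^x ≤ ω < 1 - (1-q)^(x+1)`, so that `X q` is Geometric with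
success probability `q`: `P(X q = x) = q(1-q)^x` for `x = 0, 1, 2, …`.  Then for every
integer `x ≥ 1`, `lim_{ε→0⁺} P(X (p+ε) = x - 1 | X p = x)/ε = x/(p(1-p))`. -/
theorem geometric_left_jump_rate
    (p : ℝ) (hp : p ∈ Set.Ioo (0 : ℝ) 1)
    (μ : Measure ℝ) (hμ : μ = volume.restrict (Set.Icc (0 : ℝ) 1))
    (X : ℝ → ℝ → ℕ)
    (hX : ∀ q ∈ Set.Ioo (0 : ℝ) 1, ∀ ω ∈ Set.Ico (0 : ℝ) 1,
      1 - (1 - q) ^ (X q ω) ≤ ω ∧ ω < 1 - (1 - q) ^ (X q ω + 1))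
    (x : ℕ) (hx : 1 ≤ x) :
    Tendsto
      (fun ε : ℝ => ((μ[|{ω | X p ω = x}]) {ω | X (p + ε) ω = x - 1}).toReal / ε)
      (𝓝[>] (0 : ℝ)) (𝓝 ((x : ℝ) / (p * (1 - p)))) := by
  have hcond : μ[|{ω | X p ω = x}] = volume[|Ico (geomCdf p x) (geomCdf p (x + 1))] := by
    rw [hμ, ← Measure.restrict_congr_set Ico_ae_eq_Icc, cond_restrict _ measurableSet_Ico,
      setOf_eq_inter_Ico_eq_Ico_geomCdf hp (hX p hp)]
  refine (tendsto_geomCdf_jump_rate hp hx).congr' ?_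
  filter_upwards [eventually_geomCdf_add_lt (geomCdf_strictMono hp (Nat.sub_lt hx one_pos)),
    eventually_geomCdf_add_lt (geomCdf_strictMono hp x.lt_succ_self),
    eventually_nhdsWithin_of_eventually_nhds (eventually_lt_nhds (sub_pos.2 hp.2)),
    self_mem_nhdsWithin] with ε hlo hhi hε_lt hε_pos
  have hq : p + ε ∈ Ioo (0 : ℝ) 1 := ⟨by linarith [hp.1, mem_Ioi.1 hε_pos], by linarith⟩
  have hjump := Ico_inter_setOf_eq_Ico_geomCdf (n := x - 1) hq (hX _ hq)
    (Ico_geomCdf_subset (Ioo_subset_Icc_self hp) x) hlo.le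
    (by rw [Nat.sub_add_cancel hx]; exact hhi.le)
  rw [Nat.sub_add_cancel hx] at hjump
  rw [hcond, volume_cond_Ico_toReal hjump
    (geomCdf_le_geomCdf (by linarith [mem_Ioi.1 hε_pos]) hq.2.le x) hhi.le]

end
end

section
/- Right jump rate of an inversion-parameterized Poisson variable: fix p > 0 and on Ω = [0,1] with the uniform measure define X(q)(ω) to be the unique nonnegative integer x with F_q(x−1) ≤ ω < F_q(x), where F_q is the cumulative distribution function of the Poisson distribution with rate q, so that X(q) ~ Pois(q). Then for every nonnegative integer x, lim_{ε→0⁺} P(X(p+ε) = x+1 | X(p) = x)/ε = 1. -/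
open MeasureTheory Filter Topology ProbabilityTheory Set

noncomputable section

/-- `poissonCDF q x = F_q(x-1) = Σ_{k<x} e^{-q} q^k / k!`, the probability that a Poisson
random variable with rate `q` is `< x` (so `poissonCDF q 0 = F_q(-1) = 0`). -/
def poissonCDF (q : ℝ) (x : ℕ) : ℝ :=
  ∑ k ∈ Finset.range x, Real.exp (-q) * q ^ k / (Nat.factorial k)

/-!
On `[0, 1)` the event `{X q = n}` is the interval `[F_q(n-1), F_q(n))`. For small `ε > 0`,
`F_{p+ε}(x)` lies just below `F_p(x)` (it decreases in `q`) while `F_{p+ε}(x+1)` stays above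
`F_p(x)`, so inside `{X p = x}` the event `{X (p+ε) = x+1}` is `[F_{p+ε}(x), F_p(x))`. Its
conditional probability is `(F_p(x) - F_{p+ε}(x)) / P(X p = x)`, and the limit is `1` because
`∂_q F_q(x) = -P(X q = x)`.
-/

-- Mathlib's `poissonPMFReal` takes its rate in `ℝ≥0`; here the rate varies over `ℝ`.
def poissonWeight (q : ℝ) (n : ℕ) : ℝ :=
  Real.exp (-q) * q ^ n / n.factorial

lemma poissonWeight_pos {q : ℝ} (hq : 0 < q) (n : ℕ) : 0 < poissonWeight q n := by
  unfold poissonWeight; positivity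

lemma poissonCDF_succ (q : ℝ) (n : ℕ) :
    poissonCDF q (n + 1) = poissonCDF q n + poissonWeight q n :=
  Finset.sum_range_succ _ n

lemma poissonCDF_nonneg {q : ℝ} (hq : 0 ≤ q) (n : ℕ) : 0 ≤ poissonCDF q n :=
  Finset.sum_nonneg fun k _ => by positivity

lemma monotone_poissonCDF {q : ℝ} (hq : 0 ≤ q) : Monotone (poissonCDF q) :=
  monotone_nat_of_le_succ fun n => by
    rw [poissonCDF_succ]
    exact le_add_of_nonneg_right (by unfold poissonWeight; positivity)

lemma poissonCDF_le_one {q : ℝ} (hq : 0 ≤ q) (n : ℕ) : poissonCDF q n ≤ 1 := by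
  calc poissonCDF q n = Real.exp (-q) * ∑ k ∈ Finset.range n, q ^ k / k.factorial := by
        rw [Finset.mul_sum]; exact Finset.sum_congr rfl fun k _ => mul_div_assoc ..
    _ ≤ Real.exp (-q) * Real.exp q := by gcongr; exact Real.sum_le_exp_of_nonneg hq n
    _ = 1 := by rw [← Real.exp_add, neg_add_cancel, Real.exp_zero]

lemma continuous_poissonCDF (n : ℕ) : Continuous fun q : ℝ => poissonCDF q n := by
  unfold poissonCDF; fun_prop

lemma hasDerivAt_poissonWeight_succ (q : ℝ) (n : ℕ) :
    HasDerivAt (fun q => poissonWeight q (n + 1))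
      (poissonWeight q n - poissonWeight q (n + 1)) q := by
  refine (((hasDerivAt_neg q).exp.fun_mul (hasDerivAt_pow (n + 1) q)).div_const
    ((n + 1).factorial : ℝ)).congr_deriv ?_
  simp only [poissonWeight, Nat.factorial_succ, Nat.cast_mul, Nat.add_sub_cancel]
  field_simp
  push_cast
  ring

lemma hasDerivAt_poissonCDF_succ (q : ℝ) (n : ℕ) :
    HasDerivAt (fun q => poissonCDF q (n + 1)) (-poissonWeight q n) q := by
  induction n with
  | zero => simpa [poissonCDF, poissonWeight] using (hasDerivAt_neg q).exp
  | succ n ih =>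
    simp_rw [poissonCDF_succ _ (n + 1)]
    exact (ih.add (hasDerivAt_poissonWeight_succ q n)).congr_deriv (by ring)

lemma tendsto_poissonCDF_sub_div (p : ℝ) (n : ℕ) :
    Tendsto (fun ε => (poissonCDF p (n + 1) - poissonCDF (p + ε) (n + 1)) / ε)
      (𝓝[>] 0) (𝓝 (poissonWeight p n)) := by
  convert (hasDerivAt_poissonCDF_succ p n).tendsto_slope_zero_right.neg using 2 with ε
  · rw [smul_eq_mul, ← mul_neg, neg_sub, div_eq_inv_mul]
  · rw [neg_neg]

lemma tendsto_poissonCDF_add (p : ℝ) (n : ℕ) :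
    Tendsto (fun ε => poissonCDF (p + ε) n) (𝓝[>] 0) (𝓝 (poissonCDF p n)) :=
  (((continuous_poissonCDF n).comp (continuous_const_add p)).tendsto' 0 _ (by simp)).mono_left
    nhdsWithin_le_nhds

lemma inversion_fiber_inter_Ico {F : ℕ → ℝ} (hF : Monotone F) (hF0 : 0 ≤ F 0)
    (hF1 : ∀ n, F n ≤ 1) {X : ℝ → ℕ}
    (hX : ∀ ω ∈ Ico (0 : ℝ) 1, F (X ω) ≤ ω ∧ ω < F (X ω + 1)) (n : ℕ) :
    {ω | X ω = n} ∩ Ico 0 1 = Ico (F n) (F (n + 1)) := by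
  ext ω
  constructor
  · rintro ⟨rfl, hω⟩
    exact hX ω hω
  · rintro ⟨hlo, hhi⟩
    have hω : ω ∈ Ico (0 : ℝ) 1 := ⟨(hF0.trans (hF n.zero_le)).trans hlo, hhi.trans_le (hF1 _)⟩
    obtain ⟨hXlo, hXhi⟩ := hX ω hω
    refine ⟨le_antisymm ?_ ?_, hω⟩
    · by_contra! h
      exact hhi.not_ge ((hF h).trans hXlo)
    · by_contra! h
      exact hXhi.not_ge (hlo.trans' (hF h))

lemma inversion_fiber_ae_eq_Ico {F : ℕ → ℝ} (hF : Monotone F) (hF0 : 0 ≤ F 0)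
    (hF1 : ∀ n, F n ≤ 1) {X : ℝ → ℕ}
    (hX : ∀ ω ∈ Ico (0 : ℝ) 1, F (X ω) ≤ ω ∧ ω < F (X ω + 1)) (n : ℕ) :
    {ω | X ω = n} =ᵐ[volume.restrict (Icc 0 1)] Ico (F n) (F (n + 1)) := by
  rw [Measure.restrict_congr_set Ico_ae_eq_Icc.symm, eventuallyEq_set]
  filter_upwards [ae_restrict_mem measurableSet_Ico] with ω hω
  simp only [← inversion_fiber_inter_Ico hF hF0 hF1 hX n, mem_inter_iff, hω, and_true]
  exact Iff.rfl

lemma cond_congr_of_ae_eq {Ω : Type*} [MeasurableSpace Ω] {μ : Measure Ω} {s s' t t' : Set Ω}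
    (hs : s =ᵐ[μ] s') (ht : t =ᵐ[μ] t') : μ[t | s] = μ[t' | s'] := by
  rw [measure_congr (cond_absolutelyContinuous.ae_eq ht), ProbabilityTheory.cond,
    ProbabilityTheory.cond, measure_congr hs, Measure.restrict_congr_set hs]

lemma volume_restrict_Icc_Ico {u v : ℝ} (hu : 0 ≤ u) (hv : v ≤ 1) :
    volume.restrict (Icc 0 1) (Ico u v) = ENNReal.ofReal (v - u) := by
  rw [Measure.restrict_eq_self _ (Ico_subset_Icc_self.trans (Icc_subset_Icc hu hv)),
    Real.volume_Ico]

lemma toReal_cond_Ico_Ico {a b c d : ℝ} (ha : 0 ≤ a) (hac : a ≤ c) (hcb : c ≤ b) (hbd : b ≤ d)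
    (hb : b ≤ 1) :
    ((volume.restrict (Icc (0 : ℝ) 1))[Ico c d | Ico a b]).toReal = (b - c) / (b - a) := by
  rw [cond_apply' measurableSet_Ico, Ico_inter_Ico, max_eq_right hac, min_eq_left hbd,
    volume_restrict_Icc_Ico ha hb, volume_restrict_Icc_Ico (ha.trans hac) hb,
    ENNReal.toReal_mul, ENNReal.toReal_inv, ENNReal.toReal_ofReal (by linarith),
    ENNReal.toReal_ofReal (by linarith), inv_mul_eq_div]

/-- **Right jump rate of an inversion-parameterized Poisson variable.**  Fix `p > 0` and on
`Ω = [0,1]` with the uniform measure define `X q ω` to be the unique nonnegative integer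
`x` with `F_q(x-1) ≤ ω < F_q(x)`, where `F_q` is the cumulative distribution function of the
Poisson distribution with rate `q`, so that `X q ∼ Pois(q)`.  Then for every nonnegative
integer `x`, `lim_{ε→0⁺} P(X (p+ε) = x + 1 | X p = x)/ε = 1`. -/
theorem poisson_right_jump_rate
    (p : ℝ) (hp : 0 < p)
    (μ : Measure ℝ) (hμ : μ = volume.restrict (Set.Icc (0 : ℝ) 1))
    (X : ℝ → ℝ → ℕ)
    (hX : ∀ q : ℝ, 0 < q → ∀ ω ∈ Set.Ico (0 : ℝ) 1,
      poissonCDF q (X q ω) ≤ ω ∧ ω < poissonCDF q (X q ω + 1))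
    (x : ℕ) :
    Tendsto
      (fun ε : ℝ => ((μ[|{ω | X p ω = x}]) {ω | X (p + ε) ω = x + 1}).toReal / ε)
      (𝓝[>] (0 : ℝ)) (𝓝 (1 : ℝ)) := by
  subst hμ
  have hfiber (q : ℝ) (hq : 0 < q) (n : ℕ) : {ω | X q ω = n} =ᵐ[volume.restrict (Icc 0 1)]
      Ico (poissonCDF q n) (poissonCDF q (n + 1)) :=
    inversion_fiber_ae_eq_Ico (monotone_poissonCDF hq.le) (poissonCDF_nonneg hq.le 0)
      (poissonCDF_le_one hq.le) (hX q hq) n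
  have hw := poissonWeight_pos hp x
  have hslope := tendsto_poissonCDF_sub_div p x
  have hac : ∀ᶠ ε in 𝓝[>] 0, poissonCDF p x ≤ poissonCDF (p + ε) (x + 1) :=
    (tendsto_poissonCDF_add p (x + 1)).eventually_const_le
      (by rw [poissonCDF_succ]; exact lt_add_of_pos_right _ hw)
  have hcb : ∀ᶠ ε in 𝓝[>] 0, poissonCDF (p + ε) (x + 1) ≤ poissonCDF p (x + 1) := by
    filter_upwards [hslope.eventually_const_lt hw, self_mem_nhdsWithin] with ε hpos (hε : 0 < ε)
    exact sub_nonneg.1 (div_pos_iff_of_pos_right hε |>.1 hpos).le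
  have hbd : ∀ᶠ ε in 𝓝[>] 0, poissonCDF p (x + 1) ≤ poissonCDF (p + ε) (x + 1 + 1) :=
    (tendsto_poissonCDF_add p (x + 1 + 1)).eventually_const_le
      (by rw [poissonCDF_succ _ (x + 1)]; exact lt_add_of_pos_right _ (poissonWeight_pos hp _))
  have hlim := hslope.div_const (poissonWeight p x)
  rw [div_self hw.ne'] at hlim
  refine hlim.congr' ?_
  filter_upwards [self_mem_nhdsWithin, hac, hcb, hbd] with ε (hε : 0 < ε) hac hcb hbd
  rw [cond_congr_of_ae_eq (hfiber p hp x) (hfiber (p + ε) (by positivity) (x + 1)),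
    toReal_cond_Ico_Ico (poissonCDF_nonneg hp.le x) hac hcb hbd (poissonCDF_le_one hp.le _),
    poissonCDF_succ p x]
  ring

end
end

section
/- Right jump rate of an inversion-parameterized Binomial variable: fix an integer n ≥ 1 and p ∈ (0,1), and on Ω = [0,1] with the uniform measure define X(q)(ω) to be the unique integer x ∈ {0,…,n} with F_q(x−1) ≤ ω < F_q(x), where F_q is the cumulative distribution function of Bin(n,q), so that X(q) ~ Bin(n,q). Then for every integer x with 0 ≤ x < n, lim_{ε→0⁺} P(X(p+ε) = x+1 | X(p) = x)/ε = (n−x)/(1−p). -/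
open MeasureTheory Filter Topology ProbabilityTheory Set

noncomputable section

/-- `binomialCDF n q x = F_q(x-1) = Σ_{k<x} C(n,k) q^k (1-q)^(n-k)`, the probability that a
`Bin(n,q)` random variable is `< x` (so `binomialCDF n q 0 = F_q(-1) = 0`). -/
def binomialCDF (n : ℕ) (q : ℝ) (x : ℕ) : ℝ :=
  ∑ k ∈ Finset.range x, (n.choose k : ℝ) * q ^ k * (1 - q) ^ (n - k)

/-!
On `[0, 1)`, `X q ω = y` exactly when `ω ∈ [F_q(y-1), F_q(y))`. Writing the summands of `F_q`
as Bernstein polynomials `b_{n,k}(q)`, their derivatives telescope to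
`∂_q F_q(x) = -n b_{n-1,x}(q) < 0`, so for small `ε > 0` the cells `{X p = x}` and
`{X (p + ε) = x + 1}` overlap in exactly `[F_{p+ε}(x), F_p(x))`. The conditional probability is
then `(F_p(x) - F_{p+ε}(x)) / b_{n,x}(p)`, and after dividing by `ε` it tends to
`n b_{n-1,x}(p) / b_{n,x}(p) = (n - x) / (1 - p)`.
-/

open Polynomial

namespace bernsteinPolynomial

section

variable {R : Type*} [CommRing R]

theorem derivative_sum_range_succ (n x : ℕ) :
    derivative (∑ k ∈ Finset.range (x + 1), bernsteinPolynomial R n k) =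
      -(n : R[X]) * bernsteinPolynomial R (n - 1) x := by
  induction x with
  | zero => simp [derivative_zero]
  | succ x ih =>
    rw [Finset.sum_range_succ, derivative_add, ih, derivative_succ]
    ring

theorem natCast_mul_pred_mul_one_sub_X {n x : ℕ} (hx : x < n) :
    (n : R[X]) * bernsteinPolynomial R (n - 1) x * (1 - X) =
      ((n : R[X]) - (x : R[X])) * bernsteinPolynomial R n x := by
  obtain ⟨m, rfl⟩ : ∃ m, n = m + 1 := ⟨n - 1, by omega⟩
  have hchoose := congrArg (Nat.cast : ℕ → R[X]) (Nat.choose_mul_succ_eq m x)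
  rw [Nat.cast_mul, Nat.cast_mul, Nat.cast_sub (by omega)] at hchoose
  simp only [bernsteinPolynomial, Nat.add_sub_cancel, Nat.sub_add_comm (by omega : x ≤ m),
    pow_succ]
  push_cast at hchoose ⊢
  linear_combination X ^ x * (1 - X) ^ (m - x) * (1 - X) * hchoose

end

theorem eval_pos {n k : ℕ} {q : ℝ} (hq : q ∈ Ioo (0 : ℝ) 1) (hk : k ≤ n) :
    0 < (bernsteinPolynomial ℝ n k).eval q := by
  have : 0 < 1 - q := sub_pos.mpr hq.2
  have := hq.1
  have : 0 < n.choose k := Nat.choose_pos hk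
  simp only [bernsteinPolynomial, eval_mul, eval_pow, eval_sub, eval_one, eval_X, eval_natCast]
  positivity

theorem natCast_mul_eval_pred_div_eval {n x : ℕ} (hx : x < n) {q : ℝ} (hq : q ∈ Ioo (0 : ℝ) 1) :
    n * (bernsteinPolynomial ℝ (n - 1) x).eval q / (bernsteinPolynomial ℝ n x).eval q =
      ((n : ℝ) - x) / (1 - q) := by
  have h := congrArg (eval q) (natCast_mul_pred_mul_one_sub_X (R := ℝ) hx)
  simp only [eval_mul, eval_sub, eval_natCast, eval_one, eval_X] at h
  rw [div_eq_div_iff (eval_pos hq hx.le).ne' (sub_pos.2 hq.2).ne', h]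

theorem eval_nonneg (n k : ℕ) {q : ℝ} (hq : q ∈ Icc (0 : ℝ) 1) :
    0 ≤ (bernsteinPolynomial ℝ n k).eval q := by
  have : 0 ≤ 1 - q := sub_nonneg.mpr hq.2
  have := hq.1
  simp only [bernsteinPolynomial, eval_mul, eval_pow, eval_sub, eval_one, eval_X, eval_natCast]
  positivity

end bernsteinPolynomial

namespace binomialCDF

theorem eq_eval_sum_bernsteinPolynomial (n : ℕ) (q : ℝ) (x : ℕ) :
    binomialCDF n q x = (∑ k ∈ Finset.range x, bernsteinPolynomial ℝ n k).eval q := by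
  simp [binomialCDF, bernsteinPolynomial, eval_finsetSum]

theorem succ (n : ℕ) (q : ℝ) (k : ℕ) :
    binomialCDF n q (k + 1) = binomialCDF n q k + (bernsteinPolynomial ℝ n k).eval q := by
  simp only [eq_eval_sum_bernsteinPolynomial, Finset.sum_range_succ, eval_add]

theorem zero (n : ℕ) (q : ℝ) : binomialCDF n q 0 = 0 := by
  simp [binomialCDF]

theorem self_succ (n : ℕ) (q : ℝ) : binomialCDF n q (n + 1) = 1 := by
  simp [eq_eval_sum_bernsteinPolynomial, bernsteinPolynomial.sum]

theorem monotone (n : ℕ) {q : ℝ} (hq : q ∈ Icc (0 : ℝ) 1) : Monotone (binomialCDF n q) :=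
  monotone_nat_of_le_succ fun k => by
    rw [succ]
    exact le_add_of_nonneg_right (bernsteinPolynomial.eval_nonneg n k hq)

theorem nonneg (n : ℕ) {q : ℝ} (hq : q ∈ Icc (0 : ℝ) 1) (k : ℕ) : 0 ≤ binomialCDF n q k :=
  zero n q ▸ monotone n hq k.zero_le

theorem le_one {n : ℕ} {q : ℝ} (hq : q ∈ Icc (0 : ℝ) 1) {k : ℕ} (hk : k ≤ n + 1) :
    binomialCDF n q k ≤ 1 :=
  self_succ n q ▸ monotone n hq hk

theorem lt_succ {n k : ℕ} {q : ℝ} (hq : q ∈ Ioo (0 : ℝ) 1) (hk : k ≤ n) :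
    binomialCDF n q k < binomialCDF n q (k + 1) := by
  rw [succ]
  exact lt_add_of_pos_right _ (bernsteinPolynomial.eval_pos hq hk)

theorem continuous (n x : ℕ) : Continuous fun q => binomialCDF n q x := by
  simp only [eq_eval_sum_bernsteinPolynomial]
  exact Polynomial.continuous _

theorem hasDerivAt_succ (n x : ℕ) (q : ℝ) :
    HasDerivAt (fun q => binomialCDF n q (x + 1))
      (-(n * (bernsteinPolynomial ℝ (n - 1) x).eval q)) q := by
  have h := (∑ k ∈ Finset.range (x + 1), bernsteinPolynomial ℝ n k).hasDerivAt q
  rw [bernsteinPolynomial.derivative_sum_range_succ] at h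
  rw [funext fun q => eq_eval_sum_bernsteinPolynomial n q (x + 1)]
  simpa using h

theorem tendsto_sub_div_nhdsGT (n x : ℕ) (p : ℝ) :
    Tendsto (fun ε => (binomialCDF n p (x + 1) - binomialCDF n (p + ε) (x + 1)) / ε)
      (𝓝[>] 0) (𝓝 (n * (bernsteinPolynomial ℝ (n - 1) x).eval p)) := by
  have h := (hasDerivAt_succ n x p).tendsto_slope_zero_right.neg
  rw [neg_neg] at h
  refine h.congr fun ε => ?_
  rw [smul_eq_mul, ← mul_neg, neg_sub, div_eq_inv_mul]

theorem eventually_interlace_nhdsGT {n x : ℕ} (hx : x < n) {p : ℝ} (hp : p ∈ Ioo (0 : ℝ) 1) :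
    ∀ᶠ ε in 𝓝[>] 0, p + ε ∈ Ioo (0 : ℝ) 1 ∧
      binomialCDF n p x ≤ binomialCDF n (p + ε) (x + 1) ∧
      binomialCDF n (p + ε) (x + 1) ≤ binomialCDF n p (x + 1) ∧
      binomialCDF n p (x + 1) ≤ binomialCDF n (p + ε) (x + 2) := by
  have hshift : Tendsto (fun ε : ℝ => p + ε) (𝓝[>] 0) (𝓝 p) := by
    have : Tendsto (fun ε : ℝ => p + ε) (𝓝 0) (𝓝 p) := by
      simpa using (continuous_const_add p).tendsto 0
    exact this.mono_left nhdsWithin_le_nhds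
  have hcont (y : ℕ) : Tendsto (fun ε => binomialCDF n (p + ε) y) (𝓝[>] 0)
      (𝓝 (binomialCDF n p y)) :=
    ((continuous n y).tendsto p).comp hshift
  have hrate : 0 < (n : ℝ) * (bernsteinPolynomial ℝ (n - 1) x).eval p :=
    mul_pos (by exact_mod_cast hx.pos) (bernsteinPolynomial.eval_pos hp (by omega))
  filter_upwards [self_mem_nhdsWithin, hshift.eventually (Ioo_mem_nhds hp.1 hp.2),
    (hcont (x + 1)).eventually (eventually_gt_nhds (lt_succ hp hx.le)),
    (tendsto_sub_div_nhdsGT n x p).eventually (eventually_gt_nhds hrate),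
    (hcont (x + 2)).eventually (eventually_gt_nhds (lt_succ hp hx))]
    with ε hε hq h1 h2 h3
  refine ⟨hq, h1.le, ?_, h3.le⟩
  have := (div_pos_iff_of_pos_right (mem_Ioi.1 hε)).1 h2
  linarith

end binomialCDF

theorem Monotone.eq_iff_mem_Ico_succ {β : Type*} [Preorder β] {G : ℕ → β} (hG : Monotone G)
    {m y : ℕ} {ω : β} (hm : ω ∈ Ico (G m) (G (m + 1))) : m = y ↔ ω ∈ Ico (G y) (G (y + 1)) :=
  ⟨by rintro rfl; exact hm, fun hy => by_contra fun hne =>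
    (hG.pairwise_disjoint_on_Ico_succ hne).ne_of_mem hm hy rfl⟩

theorem inter_setOf_eq_inter_Ico {n : ℕ} {X : ℝ → ℝ → ℕ}
    (hX : ∀ q ∈ Ioo (0 : ℝ) 1, ∀ ω ∈ Ico (0 : ℝ) 1,
      X q ω ≤ n ∧ binomialCDF n q (X q ω) ≤ ω ∧ ω < binomialCDF n q (X q ω + 1))
    {q : ℝ} (hq : q ∈ Ioo (0 : ℝ) 1) {s : Set ℝ} (hs : s ⊆ Ico 0 1) (y : ℕ) :
    s ∩ {ω | X q ω = y} = s ∩ Ico (binomialCDF n q y) (binomialCDF n q (y + 1)) := by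
  ext ω
  refine and_congr_right fun hω => ?_
  obtain ⟨-, hlo, hhi⟩ := hX q hq ω (hs hω)
  exact (binomialCDF.monotone n (Ioo_subset_Icc_self hq)).eq_iff_mem_Ico_succ ⟨hlo, hhi⟩

-- `{1}` is null, so only the trace on `[0, 1)` of a conditioning event matters; this replaces
-- the possibly non-measurable `{X p = x}` by an interval.
theorem cond_restrict_Icc_congr {A B : Set ℝ} (h : Ico (0 : ℝ) 1 ∩ A = Ico 0 1 ∩ B) :
    (volume.restrict (Icc (0 : ℝ) 1))[|A] = (volume.restrict (Icc (0 : ℝ) 1))[|B] := by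
  have hAB : A =ᵐ[volume.restrict (Icc (0 : ℝ) 1)] B := by
    rw [Measure.restrict_congr_set Ico_ae_eq_Icc.symm, eventuallyEq_set,
      ae_restrict_iff' measurableSet_Ico]
    refine Eventually.of_forall fun ω hω => ?_
    simpa [hω] using congrArg (ω ∈ ·) h
  rw [ProbabilityTheory.cond, ProbabilityTheory.cond, measure_congr hAB,
    Measure.restrict_congr_set hAB]

theorem cond_restrict_Icc_Ico_toReal {a b c : ℝ} {B : Set ℝ} (ha : 0 ≤ a) (hac : a ≤ c)
    (hcb : c ≤ b) (hb : b ≤ 1) (hB : Ico a b ∩ B = Ico c b) :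
    ((volume.restrict (Icc (0 : ℝ) 1))[|Ico a b] B).toReal = (b - c) / (b - a) := by
  have hsub : ∀ {d}, 0 ≤ d → Ico d b ⊆ Icc 0 1 := fun hd =>
    Ico_subset_Icc_self.trans (Icc_subset_Icc hd hb)
  rw [cond_apply measurableSet_Ico, hB, Measure.restrict_apply' measurableSet_Icc,
    Measure.restrict_apply' measurableSet_Icc, inter_eq_left.2 (hsub ha),
    inter_eq_left.2 (hsub (ha.trans hac)), Real.volume_Ico, Real.volume_Ico,
    ENNReal.toReal_mul, ENNReal.toReal_inv, ENNReal.toReal_ofReal (by linarith),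
    ENNReal.toReal_ofReal (by linarith), div_eq_inv_mul]

theorem binomial_right_jump_rate_general
    (n : ℕ) (p : ℝ) (hp : p ∈ Set.Ioo (0 : ℝ) 1)
    (μ : Measure ℝ) (hμ : μ = volume.restrict (Set.Icc (0 : ℝ) 1))
    (X : ℝ → ℝ → ℕ)
    (hX : ∀ q ∈ Set.Ioo (0 : ℝ) 1, ∀ ω ∈ Set.Ico (0 : ℝ) 1,
      X q ω ≤ n ∧ binomialCDF n q (X q ω) ≤ ω ∧ ω < binomialCDF n q (X q ω + 1))
    (x : ℕ) (hx : x < n) :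
    Tendsto
      (fun ε : ℝ => ((μ[|{ω | X p ω = x}]) {ω | X (p + ε) ω = x + 1}).toReal / ε)
      (𝓝[>] (0 : ℝ)) (𝓝 (((n : ℝ) - x) / (1 - p))) := by
  subst hμ
  have hF0 : 0 ≤ binomialCDF n p x := binomialCDF.nonneg n (Ioo_subset_Icc_self hp) x
  have hF1 : binomialCDF n p (x + 1) ≤ 1 :=
    binomialCDF.le_one (Ioo_subset_Icc_self hp) (by omega)
  have hI : Ico (binomialCDF n p x) (binomialCDF n p (x + 1)) ⊆ Ico 0 1 := Ico_subset_Ico hF0 hF1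
  have hcond : (volume.restrict (Icc (0 : ℝ) 1))[|{ω | X p ω = x}] =
      (volume.restrict (Icc (0 : ℝ) 1))[|Ico (binomialCDF n p x) (binomialCDF n p (x + 1))] :=
    cond_restrict_Icc_congr <| by
      rw [inter_setOf_eq_inter_Ico hX hp subset_rfl, inter_eq_right.2 hI]
  have hmass : binomialCDF n p (x + 1) - binomialCDF n p x =
      (bernsteinPolynomial ℝ n x).eval p := by
    rw [binomialCDF.succ]; ring
  rw [← bernsteinPolynomial.natCast_mul_eval_pred_div_eval hx hp]
  refine ((binomialCDF.tendsto_sub_div_nhdsGT n x p).div_const _).congr' ?_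
  filter_upwards [binomialCDF.eventually_interlace_nhdsGT hx hp] with ε ⟨hq, h1, h2, h3⟩
  have hcell : Ico (binomialCDF n p x) (binomialCDF n p (x + 1)) ∩ {ω | X (p + ε) ω = x + 1} =
      Ico (binomialCDF n (p + ε) (x + 1)) (binomialCDF n p (x + 1)) := by
    rw [inter_setOf_eq_inter_Ico hX hq hI, Ico_inter_Ico, max_eq_right h1, min_eq_left h3]
  rw [hcond, cond_restrict_Icc_Ico_toReal hF0 h1 h2 hF1 hcell, div_right_comm, hmass]

/-- **Right jump rate of an inversion-parameterized Binomial variable.**  Fix an integer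
`n ≥ 1` and `p ∈ (0,1)`, and on `Ω = [0,1]` with the uniform measure define `X q ω` to be
the unique integer `x ∈ {0,…,n}` with `F_q(x-1) ≤ ω < F_q(x)`, where `F_q` is the cumulative
distribution function of `Bin(n,q)`, so that `X q ∼ Bin(n,q)`.  Then for every integer `x`
with `0 ≤ x < n`, `lim_{ε→0⁺} P(X (p+ε) = x + 1 | X p = x)/ε = (n-x)/(1-p)`. -/
theorem binomial_right_jump_rate
    (n : ℕ) (hn : 1 ≤ n) (p : ℝ) (hp : p ∈ Set.Ioo (0 : ℝ) 1)
    (μ : Measure ℝ) (hμ : μ = volume.restrict (Set.Icc (0 : ℝ) 1))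
    (X : ℝ → ℝ → ℕ)
    (hX : ∀ q ∈ Set.Ioo (0 : ℝ) 1, ∀ ω ∈ Set.Ico (0 : ℝ) 1,
      X q ω ≤ n ∧ binomialCDF n q (X q ω) ≤ ω ∧ ω < binomialCDF n q (X q ω + 1))
    (x : ℕ) (hx : x < n) :
    Tendsto
      (fun ε : ℝ => ((μ[|{ω | X p ω = x}]) {ω | X (p + ε) ω = x + 1}).toReal / ε)
      (𝓝[>] (0 : ℝ)) (𝓝 (((n : ℝ) - x) / (1 - p))) :=
  binomial_right_jump_rate_general n p hp μ hμ X hX x hx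

end
end

section
/- Cubic growth of the score-function estimator variance for a Binomial variable: fix p ∈ (0,1) and let X_n ~ Bin(n,p) for each integer n ≥ 1. Then there exists a constant C = C(p) such that for all n, |Var[X_n(X_n − np)/(p(1−p))] − n³·p/(1−p)| ≤ C·n². In particular the variance of the score-function estimator grows as n³·p/(1−p) + O(n²), cubically in n. -/
open MeasureTheory ProbabilityTheory Finset
open scoped ENNReal

/-! Expanding `X (X - n p)` and its square in the falling factorials `X.descFactorial k`, the
factorial moments `E[X.descFactorial k] = n.descFactorial k * p ^ k` of `Bin(n, p)` make the
variance of the estimator an explicit polynomial in `n`: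
`n³ p/q + (4 - 6p)/q · n² + (1 - 6pq)/(pq) · n` with `q = 1 - p`. -/

theorem Nat.choose_add_mul_descFactorial (n k j : ℕ) :
    n.choose (k + j) * (k + j).descFactorial k = n.descFactorial k * (n - k).choose j := by
  rw [Nat.descFactorial_eq_factorial_mul_choose, Nat.descFactorial_eq_factorial_mul_choose,
    mul_left_comm, Nat.choose_mul (Nat.le_add_right k j), Nat.add_sub_cancel_left, mul_assoc]

theorem Nat.cast_descFactorial_eq_prod_range {R : Type*} [CommRing R] (x k : ℕ) :
    (x.descFactorial k : R) = ∏ i ∈ range k, ((x : R) - i) := by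
  rw [← descPochhammer_eval_eq_descFactorial, descPochhammer_eval_eq_prod_range]

def binomialWeight {R : Type*} [CommRing R] (n : ℕ) (p q : R) (x : ℕ) : R :=
  n.choose x * p ^ x * q ^ (n - x)

theorem binomialWeight_nonneg {R : Type*} [CommRing R] [PartialOrder R] [IsOrderedRing R]
    {p q : R} (hp : 0 ≤ p) (hq : 0 ≤ q) (n x : ℕ) : 0 ≤ binomialWeight n p q x := by
  unfold binomialWeight
  positivity

section BinomialMoments

variable {R : Type*} [CommRing R] {p q : R}

theorem sum_binomialWeight_mul_descFactorial (hpq : p + q = 1) (n k : ℕ) :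
    ∑ x ∈ range (n + 1), binomialWeight n p q x * x.descFactorial k =
      n.descFactorial k * p ^ k := by
  obtain hnk | hkn := lt_or_ge n k
  · rw [Nat.descFactorial_eq_zero_iff_lt.2 hnk, Nat.cast_zero, zero_mul]
    refine sum_eq_zero fun x hx => ?_
    rw [Nat.descFactorial_eq_zero_iff_lt.2 (by grind), Nat.cast_zero, mul_zero]
  -- only `x ≥ k` contribute; with `x = k + j` the rest is the expansion of `(p + q) ^ (n - k)`
  have hsplit : n + 1 = k + (n - k + 1) := by omega
  rw [hsplit, sum_range_add, sum_eq_zero fun x hx => by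
    rw [Nat.descFactorial_eq_zero_iff_lt.2 (mem_range.1 hx), Nat.cast_zero, mul_zero], zero_add]
  calc ∑ j ∈ range (n - k + 1), binomialWeight n p q (k + j) * (k + j).descFactorial k
      = ∑ j ∈ range (n - k + 1),
          n.descFactorial k * p ^ k * (p ^ j * q ^ (n - k - j) * (n - k).choose j) := by
        refine sum_congr rfl fun j _ => ?_
        have h : (n.choose (k + j) : R) * (k + j).descFactorial k =
            (n.descFactorial k : R) * (n - k).choose j := by
          rw [← Nat.cast_mul, ← Nat.cast_mul, Nat.choose_add_mul_descFactorial]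
        rw [binomialWeight, pow_add, Nat.sub_add_eq]
        linear_combination (p ^ k * p ^ j * q ^ (n - k - j)) * h
    _ = n.descFactorial k * p ^ k := by rw [← mul_sum, ← add_pow, hpq, one_pow, mul_one]

theorem sum_binomialWeight_mul_self_mul_sub (hpq : p + q = 1) (n : ℕ) :
    ∑ x ∈ range (n + 1), binomialWeight n p q x * (x * (x - n * p)) = n * p * q := by
  have hbasis : ∀ x : ℕ,
      (x : R) * (x - n * p) = x.descFactorial 2 + (1 - n * p) * x.descFactorial 1 := by
    intro x
    simp only [Nat.cast_descFactorial_eq_prod_range, prod_range_succ, prod_range_zero]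
    ring
  simp only [hbasis, mul_add, sum_add_distrib, mul_left_comm _ (_ - _ : R), ← mul_sum,
    sum_binomialWeight_mul_descFactorial hpq]
  simp only [Nat.cast_descFactorial_eq_prod_range, prod_range_succ, prod_range_zero]
  obtain rfl : q = 1 - p := by linear_combination hpq
  ring

theorem sum_binomialWeight_mul_self_mul_sub_sq (hpq : p + q = 1) (n : ℕ) :
    ∑ x ∈ range (n + 1), binomialWeight n p q x * (x * (x - n * p)) ^ 2 =
      n ^ 3 * p ^ 3 * q + n ^ 2 * p ^ 2 * q * (5 * q - 2 * p) + n * p * q * (1 - 6 * p * q) := by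
  have hbasis : ∀ x : ℕ, ((x : R) * (x - n * p)) ^ 2 = x.descFactorial 4 +
      (6 - 2 * n * p) * x.descFactorial 3 + (7 - 6 * n * p + n ^ 2 * p ^ 2) * x.descFactorial 2 +
      (1 - 2 * n * p + n ^ 2 * p ^ 2) * x.descFactorial 1 := by
    intro x
    simp only [Nat.cast_descFactorial_eq_prod_range, prod_range_succ, prod_range_zero]
    ring
  simp only [hbasis, mul_add, sum_add_distrib, mul_left_comm _ (_ - _ : R),
    mul_left_comm _ (_ + _ : R), ← mul_sum, sum_binomialWeight_mul_descFactorial hpq]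
  simp only [Nat.cast_descFactorial_eq_prod_range, prod_range_succ, prod_range_zero]
  obtain rfl : q = 1 - p := by linear_combination hpq
  ring

end BinomialMoments

section FiniteRange

variable {Ω α : Type*} [MeasurableSpace Ω] {μ : Measure Ω} {X : Ω → α}

theorem ae_mem_of_measure_fiber_eq_zero [Countable α] {s : Set α}
    (hs : ∀ x ∉ s, μ {ω | X ω = x} = 0) : ∀ᵐ ω ∂μ, X ω ∈ s := by
  have : ∀ᵐ ω ∂μ, ∀ x ∉ s, X ω ≠ x := ae_all_iff.2 fun x => by
    by_cases hx : x ∈ s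
    · simp [hx]
    · filter_upwards [measure_eq_zero_iff_ae_notMem.1 (hs x hx)] with ω hω _ using hω
  filter_upwards [this] with ω hω
  by_contra h
  exact hω _ h rfl

variable {E : Type*} [NormedAddCommGroup E] {s : Finset α}

theorem comp_ae_eq_sum_indicator (hXs : ∀ᵐ ω ∂μ, X ω ∈ s) (g : α → E) :
    (fun ω => g (X ω)) =ᵐ[μ]
      fun ω => ∑ x ∈ s, {ω | X ω = x}.indicator (fun _ => g x) ω := by
  classical
  filter_upwards [hXs] with ω hω
  simp only [Set.indicator_apply, Set.mem_ofPred_eq, sum_ite_eq, if_pos hω]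

variable [MeasurableSpace α] [MeasurableSingletonClass α] [IsFiniteMeasure μ]

theorem memLp_comp_of_ae_mem_finset (hX : Measurable X) (hXs : ∀ᵐ ω ∂μ, X ω ∈ s)
    (g : α → E) (r : ℝ≥0∞) : MemLp (fun ω => g (X ω)) r μ :=
  (memLp_finsetSum s fun x _ => memLp_indicator_const r (hX (measurableSet_singleton x)) (g x)
    (Or.inr (measure_ne_top μ _))).ae_eq (comp_ae_eq_sum_indicator hXs g).symm

theorem integral_comp_eq_sum_of_ae_mem_finset [NormedSpace ℝ E] [CompleteSpace E]
    (hX : Measurable X) (hXs : ∀ᵐ ω ∂μ, X ω ∈ s) (g : α → E) :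
    ∫ ω, g (X ω) ∂μ = ∑ x ∈ s, μ.real {ω | X ω = x} • g x := by
  rw [integral_congr_ae (comp_ae_eq_sum_indicator hXs g), integral_finsetSum]
  · exact sum_congr rfl fun x _ => integral_indicator_const _ (hX (measurableSet_singleton x))
  · exact fun x _ => (integrable_const (g x)).indicator (hX (measurableSet_singleton x))

end FiniteRange

def HasBinomialLaw {Ω : Type*} [MeasurableSpace Ω] (X : Ω → ℕ) (μ : Measure Ω) (n : ℕ)
    (p : ℝ) : Prop :=
  ∀ x : ℕ, μ {ω | X ω = x} = ENNReal.ofReal (binomialWeight n p (1 - p) x)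

namespace HasBinomialLaw

variable {Ω : Type*} [MeasurableSpace Ω] {μ : Measure Ω} {X : Ω → ℕ} {n : ℕ} {p : ℝ}

theorem ae_mem_range (h : HasBinomialLaw X μ n p) : ∀ᵐ ω ∂μ, X ω ∈ range (n + 1) :=
  ae_mem_of_measure_fiber_eq_zero fun x hx => by
    rw [h x, binomialWeight, Nat.choose_eq_zero_of_lt (by simpa using hx)]
    simp

variable [IsFiniteMeasure μ]

theorem memLp_comp (h : HasBinomialLaw X μ n p) (hX : Measurable X) (g : ℕ → ℝ)
    (r : ℝ≥0∞) : MemLp (fun ω => g (X ω)) r μ :=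
  memLp_comp_of_ae_mem_finset hX h.ae_mem_range g r

theorem integral_comp (h : HasBinomialLaw X μ n p) (hX : Measurable X) (hp : p ∈ Set.Icc 0 1)
    (g : ℕ → ℝ) :
    ∫ ω, g (X ω) ∂μ = ∑ x ∈ range (n + 1), binomialWeight n p (1 - p) x * g x := by
  refine (integral_comp_eq_sum_of_ae_mem_finset hX h.ae_mem_range g).trans
    (sum_congr rfl fun x _ => ?_)
  rw [smul_eq_mul, measureReal_def, h x,
    ENNReal.toReal_ofReal (binomialWeight_nonneg hp.1 (sub_nonneg.2 hp.2) n x)]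

theorem variance_score_estimator [IsProbabilityMeasure μ] (h : HasBinomialLaw X μ n p)
    (hX : Measurable X) (hp : p ∈ Set.Ioo 0 1) :
    variance (fun ω => (X ω : ℝ) * ((X ω : ℝ) - n * p) / (p * (1 - p))) μ =
      n ^ 3 * p / (1 - p) + (4 - 6 * p) / (1 - p) * n ^ 2 +
        (1 - 6 * p * (1 - p)) / (p * (1 - p)) * n := by
  obtain ⟨hp0, hp1⟩ := hp
  set g : ℕ → ℝ := fun x => x * (x - n * p) / (p * (1 - p))
  have hmean : ∫ ω, g (X ω) ∂μ = n := by
    rw [h.integral_comp hX ⟨hp0.le, hp1.le⟩]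
    simp only [g, mul_div_assoc', ← sum_div,
      sum_binomialWeight_mul_self_mul_sub (add_sub_cancel p 1)]
    field_simp
  have hsq : ∫ ω, ((fun ω => g (X ω)) ^ 2) ω ∂μ =
      (n ^ 3 * p ^ 3 * (1 - p) + n ^ 2 * p ^ 2 * (1 - p) * (5 * (1 - p) - 2 * p) +
        n * p * (1 - p) * (1 - 6 * p * (1 - p))) / (p * (1 - p)) ^ 2 := by
    rw [← sum_binomialWeight_mul_self_mul_sub_sq (add_sub_cancel p 1), sum_div]
    refine (h.integral_comp hX ⟨hp0.le, hp1.le⟩ (fun x => g x ^ 2)).trans ?_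
    simp only [g, div_pow, mul_div_assoc']
  rw [variance_eq_sub (h.memLp_comp hX g 2), hsq, hmean]
  field_simp
  ring

end HasBinomialLaw

theorem abs_mul_sq_add_mul_le {a b x : ℝ} (hx : 1 ≤ x) :
    |a * x ^ 2 + b * x| ≤ (|a| + |b|) * x ^ 2 := by
  have hx0 : 0 ≤ x := by linarith
  calc |a * x ^ 2 + b * x| ≤ |a| * x ^ 2 + |b| * x := by
        refine (abs_add_le _ _).trans_eq ?_
        rw [abs_mul, abs_mul, abs_of_nonneg (by positivity : 0 ≤ x ^ 2), abs_of_nonneg hx0]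
    _ ≤ |a| * x ^ 2 + |b| * x ^ 2 := by gcongr; nlinarith
    _ = (|a| + |b|) * x ^ 2 := by ring

/-- **Cubic growth of the score-function estimator variance for a Binomial variable.**  Fix
`p ∈ (0,1)` and let `X n ∼ Bin(n,p)` for each integer `n ≥ 1`.  Then there exists a constant
`C = C(p)` such that for all `n ≥ 1`,
`|Var[X n (X n - np)/(p(1-p))] - n³ p/(1-p)| ≤ C n²`.  In particular, the variance of the
score-function estimator grows as `n³ p/(1-p) + O(n²)`, cubically in `n`. -/
theorem binomial_score_function_estimator_variance_cubic
    {Ω : Type*} [MeasurableSpace Ω] (μ : Measure Ω) [IsProbabilityMeasure μ]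
    (p : ℝ) (hp : p ∈ Set.Ioo (0 : ℝ) 1)
    (X : ℕ → Ω → ℕ) (hX : ∀ n, Measurable (X n))
    (hlaw : ∀ n x : ℕ, μ {ω | X n ω = x} =
      ENNReal.ofReal ((n.choose x : ℝ) * p ^ x * (1 - p) ^ (n - x))) :
    ∃ C : ℝ, ∀ n : ℕ, 1 ≤ n →
      |variance (fun ω => (X n ω : ℝ) * ((X n ω : ℝ) - n * p) / (p * (1 - p))) μ -
        (n : ℝ) ^ 3 * p / (1 - p)| ≤ C * (n : ℝ) ^ 2 := by
  refine ⟨|(4 - 6 * p) / (1 - p)| + |(1 - 6 * p * (1 - p)) / (p * (1 - p))|, fun n hn => ?_⟩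
  rw [HasBinomialLaw.variance_score_estimator (hlaw n) (hX n) hp, add_assoc, add_sub_cancel_left]
  exact abs_mul_sq_add_mul_le (by exact_mod_cast hn)
end

section
/- The straight-through gradient estimator as a combination of smoothed stochastic derivatives: fix p ∈ (0,1) and let X ~ Ber(p). Define the right smoothed stochastic derivative δ̃_R = (1/(1−p))·1{X=0} and the left smoothed stochastic derivative δ̃_L = (1/p)·1{X=1}. Then E[δ̃_R] = E[δ̃_L] = 1 = d/dq E[Ber(q)] at q = p, and the convex combination p·δ̃_L + (1−p)·δ̃_R equals 1 almost surely, recovering the constant derivative 1 assigned to a Bernoulli sample by the straight-through estimator. -/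
/-!
Since `X ∈ {0, 1}` almost surely, the events `{X = 0}` and `{X = 1}` are almost surely
complementary, with probabilities `1 - p` and `p`. Each smoothed derivative is therefore an
indicator normalised by its own probability, hence has mean `1`; and at every sample exactly one
term of `p·δ̃_L + (1 - p)·δ̃_R` is nonzero, where its weight cancels the normalisation.
-/

open MeasureTheory Filter

theorem integral_one_div_mul_indicator_one {Ω : Type*} [MeasurableSpace Ω] {μ : Measure Ω}
    {s : Set Ω} {r : ℝ} (hs : MeasurableSet s) (hμs : μ.real s = r) (hr : r ≠ 0) :
    ∫ ω, (1 / r) * s.indicator (fun _ => (1 : ℝ)) ω ∂μ = 1 := by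
  rw [integral_const_mul, integral_indicator_const _ hs, hμs, smul_eq_mul, mul_one,
    one_div_mul_cancel hr]

theorem measureReal_eq_one_sub_of_ae_mem_iff_notMem {Ω : Type*} [MeasurableSpace Ω]
    {μ : Measure Ω} [IsProbabilityMeasure μ] {s t : Set Ω} (ht : MeasurableSet t)
    (hst : ∀ᵐ ω ∂μ, ω ∈ s ↔ ω ∉ t) :
    μ.real s = 1 - μ.real t := by
  have hs : s =ᵐ[μ] (tᶜ : Set Ω) := eventuallyEq_set.mpr hst
  rw [measureReal_congr hs, probReal_compl_eq_one_sub ht]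

theorem mul_one_div_mul_indicator_add_eq_one {α : Type*} {s t : Set α} {a b : ℝ}
    (ha : a ≠ 0) (hb : b ≠ 0) {x : α} (hst : x ∈ t ↔ x ∉ s) :
    a * ((1 / a) * s.indicator (fun _ => 1) x) + b * ((1 / b) * t.indicator (fun _ => 1) x)
      = 1 := by
  by_cases hx : x ∈ s
  · simp [hx, mt hst.mp (not_not_intro hx), ha]
  · simp [hx, hst.mpr hx, hb]

/-- **The straight-through gradient estimator as a combination of smoothed stochastic
derivatives.**  Fix `p ∈ (0,1)` and let `X ∼ Ber(p)`.  Define the right smoothed stochastic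
derivative `δ̃_R = (1/(1-p))·1{X=0}` and the left smoothed stochastic derivative
`δ̃_L = (1/p)·1{X=1}`.  Then `E[δ̃_R] = E[δ̃_L] = 1 = d/dq E[Ber(q)]` at `q = p`, and the
convex combination `p·δ̃_L + (1-p)·δ̃_R` equals `1` almost surely, recovering the constant
derivative `1` assigned to a Bernoulli sample by the straight-through estimator. -/
theorem straight_through_from_smoothed_stochastic_derivatives
    {Ω : Type*} [MeasurableSpace Ω] (μ : Measure Ω) [IsProbabilityMeasure μ]
    (p : ℝ) (hp : p ∈ Set.Ioo (0 : ℝ) 1)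
    (X : Ω → ℝ) (hX : Measurable X)
    (h01 : ∀ᵐ ω ∂μ, X ω = 0 ∨ X ω = 1)
    (hlaw : μ {ω | X ω = 1} = ENNReal.ofReal p) :
    (∫ ω, (1 / (1 - p)) * ({ω' : Ω | X ω' = 0}).indicator (fun _ => (1 : ℝ)) ω ∂μ) = 1
    ∧ (∫ ω, (1 / p) * ({ω' : Ω | X ω' = 1}).indicator (fun _ => (1 : ℝ)) ω ∂μ) = 1
    ∧ HasDerivAt (fun q : ℝ => q) 1 p
    ∧ (∀ᵐ ω ∂μ,
        p * ((1 / p) * ({ω' : Ω | X ω' = 1}).indicator (fun _ => (1 : ℝ)) ω) +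
          (1 - p) * ((1 / (1 - p)) * ({ω' : Ω | X ω' = 0}).indicator (fun _ => (1 : ℝ)) ω)
          = 1) := by
  obtain ⟨hp0, hp1⟩ := hp
  have hm1 : MeasurableSet {ω | X ω = 1} := hX (measurableSet_singleton 1)
  have hzero_iff : ∀ᵐ ω ∂μ, ω ∈ {ω | X ω = 0} ↔ ω ∉ {ω | X ω = 1} := by
    filter_upwards [h01] with ω hω
    rcases hω with hω | hω <;> simp [hω]
  have hμ1 : μ.real {ω | X ω = 1} = p := by
    rw [measureReal_def, hlaw, ENNReal.toReal_ofReal hp0.le]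
  have hμ0 : μ.real {ω | X ω = 0} = 1 - p := by
    rw [measureReal_eq_one_sub_of_ae_mem_iff_notMem hm1 hzero_iff, hμ1]
  refine ⟨integral_one_div_mul_indicator_one (hX (measurableSet_singleton 0)) hμ0 (by linarith),
    integral_one_div_mul_indicator_one hm1 hμ1 hp0.ne', hasDerivAt_id p, ?_⟩
  filter_upwards [hzero_iff] with ω hω
  exact mul_one_div_mul_indicator_add_eq_one hp0.ne' (by linarith) hω
end

section
/- Forward jump rate of an inversion-parameterized categorical variable: let p₁, …, p_n : I → (0,1) be differentiable functions of a real parameter θ on an open interval I with Σ_{i=1}^n p_i(θ) = 1, and on Ω = [0,1] with the uniform measure define X(θ)(ω) = x for the unique x with Σ_{i<x} p_i(θ) ≤ ω < Σ_{i≤x} p_i(θ), so X(θ) takes value x with probability p_x(θ). Fix θ and x ∈ {1, …, n−1} with Σ_{i=1}^x p_i'(θ) < 0. Then lim_{ε→0⁺} P(X(θ+ε) = x+1 | X(θ) = x)/ε = |Σ_{i=1}^x p_i'(θ)|/p_x(θ). -/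
open MeasureTheory Filter Topology ProbabilityTheory Set

/-!
At parameter `θ` the outcome `x` occupies the bin `[S_{x-1}(θ), S_x(θ))` of length `p_x(θ)`,
where `S_k = Σ_{i ≤ k} p_i`. Since `S_x'(θ) < 0`, the right end of the bin moves left as `θ`
increases, and for small `ε > 0` the points of the bin that switch to `x + 1` form exactly
`[S_x(θ + ε), S_x(θ))`. The conditional probability is therefore
`(S_x(θ) - S_x(θ + ε)) / p_x(θ)`, and dividing by `ε` gives a difference quotient of `-S_x`.
-/

def cumSum (p : ℕ → ℝ) (k : ℕ) : ℝ := ∑ i ∈ Finset.Icc 1 k, p i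

section CumSum

variable {p : ℕ → ℝ}

theorem cumSum_zero : cumSum p 0 = 0 := by simp [cumSum]

theorem cumSum_succ (k : ℕ) : cumSum p (k + 1) = cumSum p k + p (k + 1) :=
  Finset.sum_Icc_succ_top (by omega) p

theorem cumSum_monotoneOn {n : ℕ} (hp : ∀ i ∈ Finset.Icc 1 n, 0 ≤ p i) :
    MonotoneOn (cumSum p) (Iic n) := by
  intro j _ k hk hjk
  refine Finset.sum_le_sum_of_subset_of_nonneg (Finset.Icc_subset_Icc_right hjk) ?_
  intro i hi _
  exact hp i (Finset.Icc_subset_Icc_right hk hi)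

end CumSum

def IsInversionSampler (n : ℕ) (F : ℕ → ℝ) (Y : ℝ → ℕ) : Prop :=
  ∀ ω ∈ Ico (0 : ℝ) 1, Y ω ∈ Finset.Icc 1 n ∧ F (Y ω - 1) ≤ ω ∧ ω < F (Y ω)

section InversionSampler

variable {n : ℕ} {F : ℕ → ℝ}

theorem eq_of_mem_Ico_pred_of_mem_Ico_pred (hF : MonotoneOn F (Iic n)) {y z : ℕ}
    (hy : y ≤ n) (hz : z ≤ n) {ω : ℝ} (hωy : ω ∈ Ico (F (y - 1)) (F y))
    (hωz : ω ∈ Ico (F (z - 1)) (F z)) : y = z := by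
  wlog hyz : y < z generalizing y z
  · rcases (not_lt.1 hyz).eq_or_lt with h | h
    · exact h.symm
    · exact (this hz hy hωz hωy h).symm
  have : F y ≤ F (z - 1) := hF (by simpa using hy) (by simp; omega) (by omega)
  exact absurd (this.trans hωz.1) (not_le.2 hωy.2)

theorem IsInversionSampler.setOf_eq_inter_Ico_zero_one {Y : ℝ → ℕ}
    (hY : IsInversionSampler n F Y) (hF : MonotoneOn F (Iic n)) (hF0 : 0 ≤ F 0)
    (hFn : F n ≤ 1) {y : ℕ} (hy : y ≤ n) :
    {ω | Y ω = y} ∩ Ico 0 1 = Ico (F (y - 1)) (F y) := by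
  ext ω
  constructor
  · rintro ⟨rfl, hω⟩
    exact ⟨(hY ω hω).2.1, (hY ω hω).2.2⟩
  · intro hω
    have hω01 : ω ∈ Ico (0 : ℝ) 1 :=
      ⟨(hF0.trans (hF (by simp) (by simp; omega) (Nat.zero_le _))).trans hω.1,
        hω.2.trans_le ((hF (by simpa using hy) (by simp) hy).trans hFn)⟩
    obtain ⟨hYn, hYω⟩ := hY ω hω01
    exact ⟨eq_of_mem_Ico_pred_of_mem_Ico_pred hF (Finset.mem_Icc.1 hYn).2 hy hYω hω, hω01⟩

end InversionSampler

theorem cond_restrict_Icc_eq_cond_Ico {A : Set ℝ} {a b : ℝ} (hA : A ∩ Ico 0 1 = Ico a b) :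
    (volume.restrict (Icc (0 : ℝ) 1))[|A] = volume[|Ico a b] := by
  have hrestrict : (volume.restrict (Icc (0 : ℝ) 1)).restrict A = volume.restrict (Ico a b) := by
    rw [Measure.restrict_restrict' measurableSet_Icc, ← hA]
    exact Measure.restrict_congr_set ((EventuallyEq.refl _ A).inter Ico_ae_eq_Icc.symm)
  have hmass : volume.restrict (Icc (0 : ℝ) 1) A = volume (Ico a b) := by
    rw [← Measure.restrict_apply_univ, hrestrict, Measure.restrict_apply_univ]
  rw [ProbabilityTheory.cond, ProbabilityTheory.cond, hmass, hrestrict]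

theorem cond_Ico_toReal {a b c : ℝ} {B : Set ℝ} (hB : Ico a b ∩ B = Ico c b) (hab : a ≤ b)
    (hcb : c ≤ b) : (volume[B | Ico a b]).toReal = (b - c) / (b - a) := by
  rw [cond_apply measurableSet_Ico, hB, ENNReal.toReal_mul, ENNReal.toReal_inv, Real.volume_Ico,
    Real.volume_Ico, ENNReal.toReal_ofReal (sub_nonneg.2 hcb),
    ENNReal.toReal_ofReal (sub_nonneg.2 hab), div_eq_inv_mul]

theorem HasDerivAt.eventually_lt_of_neg {f : ℝ → ℝ} {D θ : ℝ} (hf : HasDerivAt f D θ)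
    (hD : D < 0) : ∀ᶠ ε in 𝓝[>] 0, f (θ + ε) < f θ := by
  filter_upwards [hf.tendsto_slope_zero_right.eventually_lt_const hD, self_mem_nhdsWithin]
    with ε hslope hε
  by_contra! h
  have := mul_nonneg (inv_nonneg.2 (le_of_lt hε)) (sub_nonneg.2 h)
  simp only [smul_eq_mul] at hslope
  linarith

theorem Ico_inter_eq_Ico_of_inter_Ico_zero_one {B : Set ℝ} {a b c d : ℝ}
    (hB : B ∩ Ico 0 1 = Ico c d) (ha : 0 ≤ a) (hb : b ≤ 1) (hac : a ≤ c) (hbd : b ≤ d) :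
    Ico a b ∩ B = Ico c b := by
  calc Ico a b ∩ B = Ico a b ∩ (B ∩ Ico 0 1) := by
        rw [inter_comm B, ← inter_assoc, inter_eq_left.2 (Ico_subset_Ico ha hb)]
    _ = Ico c b := by rw [hB, Ico_inter_Ico, max_eq_right hac, min_eq_left hbd]

theorem cond_inversionSampler_toReal {n x : ℕ} {p q : ℕ → ℝ} {Y Z : ℝ → ℕ}
    (hp : ∀ i ∈ Finset.Icc 1 n, 0 ≤ p i) (hp1 : cumSum p n = 1)
    (hq : ∀ i ∈ Finset.Icc 1 n, 0 ≤ q i) (hq1 : cumSum q n = 1)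
    (hY : IsInversionSampler n (cumSum p) Y) (hZ : IsInversionSampler n (cumSum q) Z)
    (hx1 : 1 ≤ x) (hxn : x < n) (hlow : cumSum p (x - 1) ≤ cumSum q x)
    (hmid : cumSum q x ≤ cumSum p x) (hhigh : cumSum p x ≤ cumSum q (x + 1)) :
    ((volume.restrict (Icc (0 : ℝ) 1))[{ω | Z ω = x + 1} | {ω | Y ω = x}]).toReal =
      (cumSum p x - cumSum q x) / p x := by
  have hmono := cumSum_monotoneOn hp
  have hbin := hY.setOf_eq_inter_Ico_zero_one hmono cumSum_zero.ge hp1.le hxn.le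
  have hbin' :=
    hZ.setOf_eq_inter_Ico_zero_one (cumSum_monotoneOn hq) cumSum_zero.ge hq1.le (y := x + 1) hxn
  rw [Nat.add_sub_cancel] at hbin'
  have hpx : cumSum p x = cumSum p (x - 1) + p x := by
    simpa [Nat.sub_add_cancel hx1] using cumSum_succ (p := p) (x - 1)
  have hbin_nonneg : 0 ≤ cumSum p (x - 1) :=
    cumSum_zero (p := p) ▸ hmono (by simp) (by simp; omega) (Nat.zero_le _)
  have hbin_le_one : cumSum p x ≤ 1 := (hmono (by simp; omega) (by simp) hxn.le).trans hp1.le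
  have hoverlap :=
    Ico_inter_eq_Ico_of_inter_Ico_zero_one hbin' hbin_nonneg hbin_le_one hlow hhigh
  rw [cond_restrict_Icc_eq_cond_Ico hbin, cond_Ico_toReal hoverlap (hlow.trans hmid) hmid, hpx]
  ring

theorem categorical_forward_jump_rate_general
    (n : ℕ)
    (I : Set ℝ) (hI : IsOpen I) (θ : ℝ) (hθ : θ ∈ I)
    (pr pr' : ℕ → ℝ → ℝ)
    (hrange : ∀ i ∈ Finset.Icc 1 n, ∀ t ∈ I, pr i t ∈ Set.Ioo (0 : ℝ) 1)
    (hderiv : ∀ i ∈ Finset.Icc 1 n, ∀ t ∈ I, HasDerivAt (pr i) (pr' i t) t)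
    (hsum : ∀ t ∈ I, ∑ i ∈ Finset.Icc 1 n, pr i t = 1)
    (μ : Measure ℝ) (hμ : μ = volume.restrict (Set.Icc (0 : ℝ) 1))
    (X : ℝ → ℝ → ℕ)
    (hX : ∀ t ∈ I, ∀ ω ∈ Set.Ico (0 : ℝ) 1,
      X t ω ∈ Finset.Icc 1 n ∧
      (∑ i ∈ Finset.Icc 1 (X t ω - 1), pr i t) ≤ ω ∧
      ω < ∑ i ∈ Finset.Icc 1 (X t ω), pr i t)
    (x : ℕ) (hx1 : 1 ≤ x) (hxn : x < n)
    (hneg : (∑ i ∈ Finset.Icc 1 x, pr' i θ) < 0) :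
    Tendsto
      (fun ε : ℝ => ((μ[|{ω | X θ ω = x}]) {ω | X (θ + ε) ω = x + 1}).toReal / ε)
      (𝓝[>] (0 : ℝ)) (𝓝 (|∑ i ∈ Finset.Icc 1 x, pr' i θ| / pr x θ)) := by
  set S : ℝ → ℕ → ℝ := fun t => cumSum (pr · t)
  have hweights (t : ℝ) (ht : t ∈ I) : ∀ i ∈ Finset.Icc 1 n, 0 ≤ pr i t :=
    fun i hi => (hrange i hi t ht).1.le
  have hderivS {k : ℕ} (hk : k ≤ n) : HasDerivAt (S · k) (cumSum (pr' · θ) k) θ :=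
    HasDerivAt.fun_sum fun i hi => hderiv i (Finset.Icc_subset_Icc_right hk hi) θ hθ
  have hshift : Tendsto (θ + ·) (𝓝[>] 0) (𝓝 θ) :=
    tendsto_nhdsWithin_of_tendsto_nhds (by simpa using (continuous_const_add θ).tendsto 0)
  have hgap {k : ℕ} (hk : k + 1 ∈ Finset.Icc 1 n) : S θ k < S θ (k + 1) := by
    simpa [S, cumSum_succ] using (hrange _ hk θ hθ).1
  have hlow : S θ (x - 1) < S θ x := by
    simpa [Nat.sub_add_cancel hx1] using hgap (k := x - 1) (by simp; omega)
  have hhigh : S θ x < S θ (x + 1) := hgap (by simp; omega)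
  have hrate : ∀ᶠ ε in 𝓝[>] 0,
      ((μ[|{ω | X θ ω = x}]) {ω | X (θ + ε) ω = x + 1}).toReal / ε =
        -(ε⁻¹ * (S (θ + ε) x - S θ x)) / pr x θ := by
    filter_upwards [hshift.eventually (hI.mem_nhds hθ),
      hshift.eventually ((hderivS hxn.le).continuousAt.eventually (lt_mem_nhds hlow)),
      (hderivS hxn.le).eventually_lt_of_neg hneg,
      hshift.eventually ((hderivS (k := x + 1) hxn).continuousAt.eventually (lt_mem_nhds hhigh))]
      with ε hεI hεlow hεmid hεhigh
    rw [hμ, cond_inversionSampler_toReal (hweights θ hθ) (hsum θ hθ) (hweights _ hεI)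
      (hsum _ hεI) (hX θ hθ) (hX _ hεI) hx1 hxn hεlow.le hεmid.le hεhigh.le]
    ring
  rw [abs_of_neg hneg]
  exact ((hderivS hxn.le).tendsto_slope_zero_right.neg.div_const _).congr'
    (hrate.mono fun _ h => h.symm)

/-- **Forward jump rate of an inversion-parameterized categorical variable.**  Let
`pr 1, …, pr n : I → (0,1)` be differentiable functions of a real parameter `θ` on an open
set `I` with `Σ_{i=1}^n pr i θ = 1`, and on `Ω = [0,1]` with the uniform measure define
`X θ ω = x` for the unique `x ∈ {1,…,n}` with `Σ_{i<x} pr i θ ≤ ω < Σ_{i≤x} pr i θ`, so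
that `X θ` takes the value `x` with probability `pr x θ`.  Fix `θ ∈ I` and
`x ∈ {1, …, n-1}` with `Σ_{i=1}^x pr' i θ < 0` (where `pr' i θ` is the derivative of
`pr i` at `θ`).  Then
`lim_{ε→0⁺} P(X (θ+ε) = x+1 | X θ = x)/ε = |Σ_{i=1}^x pr' i θ| / pr x θ`. -/
theorem categorical_forward_jump_rate
    (n : ℕ) (hn : 1 ≤ n)
    (I : Set ℝ) (hI : IsOpen I) (θ : ℝ) (hθ : θ ∈ I)
    (pr pr' : ℕ → ℝ → ℝ)
    (hrange : ∀ i ∈ Finset.Icc 1 n, ∀ t ∈ I, pr i t ∈ Set.Ioo (0 : ℝ) 1)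
    (hderiv : ∀ i ∈ Finset.Icc 1 n, ∀ t ∈ I, HasDerivAt (pr i) (pr' i t) t)
    (hsum : ∀ t ∈ I, ∑ i ∈ Finset.Icc 1 n, pr i t = 1)
    (μ : Measure ℝ) (hμ : μ = volume.restrict (Set.Icc (0 : ℝ) 1))
    (X : ℝ → ℝ → ℕ)
    (hX : ∀ t ∈ I, ∀ ω ∈ Set.Ico (0 : ℝ) 1,
      X t ω ∈ Finset.Icc 1 n ∧
      (∑ i ∈ Finset.Icc 1 (X t ω - 1), pr i t) ≤ ω ∧
      ω < ∑ i ∈ Finset.Icc 1 (X t ω), pr i t)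
    (x : ℕ) (hx1 : 1 ≤ x) (hxn : x < n)
    (hneg : (∑ i ∈ Finset.Icc 1 x, pr' i θ) < 0) :
    Tendsto
      (fun ε : ℝ => ((μ[|{ω | X θ ω = x}]) {ω | X (θ + ε) ω = x + 1}).toReal / ε)
      (𝓝[>] (0 : ℝ)) (𝓝 (|∑ i ∈ Finset.Icc 1 x, pr' i θ| / pr x θ)) :=
  categorical_forward_jump_rate_general n I hI θ hθ pr pr' hrange hderiv hsum μ hμ X hX x hx1 hxn
    hneg
end
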